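/- Let g₁, g₂ be positive integers with g₂/2 < g₁ < g₂ and let S be a numerical semigroup. Then E(S) = {g₁, g₂} if and only if: S is a maximal element (under inclusion) of the set 𝓘∩(g₁,g₂) = {S₁ ∩ S₂ : S₁ irreducible with Frobenius number g₁, S₂ irreducible with Frobenius number g₂, g₁ ∈ S₂}, and moreover g₁ belongs to every irreducible numerical semigroup with Frobenius number g₂ that contains S. -/

import Mathlib

/-- A numerical semigroup: subset of ℕ closed under addition, containing 0, cofinite. -/
def IsNumericalSemigroup (S : Set ℕ) : Prop :=
  0 ∈ S ∧ (∀ a b, a ∈ S → b ∈ S → a + b ∈ S) ∧ Sᶜ.Finite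

/-- The set of special gaps E(S). -/
def specialGaps (S : Set ℕ) : Set ℕ :=
  {x | x ∉ S ∧ 2 * x ∈ S ∧ ∀ s ∈ S, s ≠ 0 → x + s ∈ S}

/-- `F` is the Frobenius number of `S`: the greatest natural number not in `S`. -/
def IsFrobenius (S : Set ℕ) (F : ℕ) : Prop :=
  F ∉ S ∧ ∀ m : ℕ, m ∉ S → m ≤ F

/-- Irreducible numerical semigroup. -/
def IsIrreducibleNS (S : Set ℕ) : Prop :=
  IsNumericalSemigroup S ∧ ∀ S₁ S₂ : Set ℕ, IsNumericalSemigroup S₁ →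
    IsNumericalSemigroup S₂ → S = S₁ ∩ S₂ → S = S₁ ∨ S = S₂

/-- Atomic numerical semigroup. -/
def IsAtomicNS (S : Set ℕ) : Prop :=
  IsNumericalSemigroup S ∧ ∀ (F : ℕ) (S₁ S₂ : Set ℕ), IsFrobenius S F →
    IsNumericalSemigroup S₁ → IsNumericalSemigroup S₂ →
    IsFrobenius S₁ F → IsFrobenius S₂ F → S = S₁ ∩ S₂ → S = S₁ ∨ S = S₂

/-- Pseudo-Frobenius numbers of `S`, as integers. -/
def pseudoFrob (S : Set ℕ) : Set ℤ :=
  {x | x ∉ (fun n : ℕ => (n : ℤ)) '' S ∧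
    ∀ s ∈ S, s ≠ 0 → x + (s : ℤ) ∈ (fun n : ℕ => (n : ℤ)) '' S}

/-- The semigroup C(F): 0 together with all naturals greater than F/2, except F. -/
def NSC (F : ℕ) : Set ℕ := insert 0 ({n : ℕ | F / 2 < n} \ {F})

/-- `x` is a minimal generator of `S`. -/
def IsMinGen (S : Set ℕ) (x : ℕ) : Prop :=
  x ∈ S ∧ x ≠ 0 ∧ ∀ a b, a ∈ S → b ∈ S → a ≠ 0 → b ≠ 0 → a + b ≠ x

/-!
A numerical semigroup `M` that is maximal among those avoiding `g` is irreducible with Frobenius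
number `g`, and its only special gap is `g`: any other special gap could be adjoined. Dually, if
`S ⊊ T`, the largest element of `T \ S` is a special gap of `S`; so `S` is the intersection of any
oversemigroups that contain none of its special gaps. For `E(S) = {g₁, g₂}` this produces the
decomposition `S = S₁ ∩ S₂` and its maximality. Conversely, a special gap `x ∉ {g₁, g₂}` of a maximal
`S = S₁ ∩ S₂` could be adjoined and the result enlarged to such an intersection, contradicting
maximality; the third condition guarantees `g₁` lies in the second factor.
-/

/-- The family `𝓘∩(g₁, g₂)` of the paper. -/
def irreducibleInters (g₁ g₂ : ℕ) : Set (Set ℕ) :=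
  {T | ∃ T₁ T₂ : Set ℕ, IsIrreducibleNS T₁ ∧ IsFrobenius T₁ g₁ ∧
    IsIrreducibleNS T₂ ∧ IsFrobenius T₂ g₂ ∧ g₁ ∈ T₂ ∧ T = T₁ ∩ T₂}

namespace IsNumericalSemigroup

variable {S T : Set ℕ}

theorem inter (hS : IsNumericalSemigroup S) (hT : IsNumericalSemigroup T) :
    IsNumericalSemigroup (S ∩ T) :=
  ⟨⟨hS.1, hT.1⟩, fun a b ha hb => ⟨hS.2.1 a b ha.1 hb.1, hT.2.1 a b ha.2 hb.2⟩,
    Set.compl_inter S T ▸ hS.2.2.union hT.2.2⟩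

theorem insert_of_mem_specialGaps (hS : IsNumericalSemigroup S) {x : ℕ}
    (hx : x ∈ specialGaps S) : IsNumericalSemigroup (insert x S) := by
  obtain ⟨-, h2x, hxs⟩ := hx
  have hadd : ∀ s ∈ S, x + s ∈ insert x S := fun s hs => by
    rcases eq_or_ne s 0 with rfl | hs0
    · exact Or.inl rfl
    · exact Or.inr (hxs s hs hs0)
  refine ⟨Or.inr hS.1, ?_, hS.2.2.subset fun n hn h => hn (Or.inr h)⟩
  rintro a b (ha | ha) (hb | hb)
  · exact Or.inr (by rwa [ha, hb, ← two_mul])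
  · exact ha ▸ hadd b hb
  · rw [hb, add_comm]; exact hadd a ha
  · exact Or.inr (hS.2.1 a b ha hb)

theorem exists_isFrobenius (hS : IsNumericalSemigroup S) {g : ℕ} (hg : g ∉ S) :
    ∃ F, IsFrobenius S F :=
  ⟨sSup Sᶜ, Set.Nonempty.csSup_mem ⟨g, hg⟩ hS.2.2,
    fun _ hm => le_csSup hS.2.2.bddAbove hm⟩

/-- The largest element of `T \ S` is a special gap of `S`. -/
theorem eq_of_subset_of_disjoint_specialGaps (hS : IsNumericalSemigroup S)
    (hT : IsNumericalSemigroup T) (hST : S ⊆ T) (hdisj : Disjoint (specialGaps S) T) :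
    S = T := by
  by_contra hne
  have hdiff : (T \ S).Nonempty := Set.sdiff_nonempty.mpr fun h => hne (hST.antisymm h)
  have hfin : (T \ S).Finite := hS.2.2.subset fun _ hn => hn.2
  set m := sSup (T \ S)
  obtain ⟨hmT, hmS⟩ : m ∈ T \ S := hdiff.csSup_mem hfin
  have hm0 : m ≠ 0 := fun h => hmS (h ▸ hS.1)
  have above : ∀ n ∈ T, m < n → n ∈ S := fun n hn hlt => by
    by_contra hnS
    exact (le_csSup hfin.bddAbove ⟨hn, hnS⟩).not_gt hlt
  have hmE : m ∈ specialGaps S :=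
    ⟨hmS, two_mul m ▸ above _ (hT.2.1 m m hmT hmT) (by omega),
      fun s hs hs0 => above _ (hT.2.1 m s hmT (hST hs)) (by omega)⟩
  exact hdisj.ne_of_mem hmE hmT rfl

end IsNumericalSemigroup

namespace IsFrobenius

variable {S T : Set ℕ} {F : ℕ}

theorem mem_of_lt (hF : IsFrobenius S F) {n : ℕ} (hn : F < n) : n ∈ S := by
  by_contra h
  exact (hF.2 n h).not_gt hn

theorem inter (hS : IsFrobenius S F) {G : ℕ} (hT : IsFrobenius T G) (hFG : F ≤ G) :
    IsFrobenius (S ∩ T) G :=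
  ⟨fun h => hT.1 h.2, fun m hm => by
    by_contra hlt
    exact hm ⟨hS.mem_of_lt (by omega), hT.mem_of_lt (by omega)⟩⟩

theorem mem_specialGaps (hF : IsFrobenius S F) (hS : IsNumericalSemigroup S) :
    F ∈ specialGaps S := by
  have hF0 : F ≠ 0 := fun h => hF.1 (h ▸ hS.1)
  exact ⟨hF.1, hF.mem_of_lt (by omega), fun s _ hs0 => hF.mem_of_lt (by omega)⟩

end IsFrobenius

theorem IsIrreducibleNS.eq_of_mem_specialGaps {S : Set ℕ} {F x : ℕ} (hS : IsIrreducibleNS S)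
    (hF : IsFrobenius S F) (hx : x ∈ specialGaps S) : x = F := by
  by_contra hne
  have hsplit : S = insert x S ∩ insert F S := by
    ext n
    simp only [Set.mem_inter_iff, Set.mem_insert_iff]
    constructor
    · exact fun h => ⟨Or.inr h, Or.inr h⟩
    · rintro ⟨rfl | h, rfl | h'⟩
      exacts [absurd rfl hne, h', h, h]
  rcases hS.2 _ _ (hS.1.insert_of_mem_specialGaps hx)
      (hS.1.insert_of_mem_specialGaps (hF.mem_specialGaps hS.1)) hsplit with h | h
  · exact hx.1 (h ▸ Set.mem_insert x S)
  · exact hF.1 (h ▸ Set.mem_insert F S)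

section MaximalAvoiding

variable {M : Set ℕ} {g : ℕ}

theorem eq_of_mem_specialGaps_of_maximal
    (hM : Maximal (fun T => IsNumericalSemigroup T ∧ g ∉ T) M) {x : ℕ}
    (hx : x ∈ specialGaps M) : x = g := by
  by_contra hne
  have hins : insert x M ⊆ M :=
    hM.2 ⟨hM.1.1.insert_of_mem_specialGaps hx, by simp [Ne.symm hne, hM.1.2]⟩
      (Set.subset_insert x M)
  exact hx.1 (hins (Set.mem_insert x M))

theorem isFrobenius_of_maximal (hM : Maximal (fun T => IsNumericalSemigroup T ∧ g ∉ T) M) :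
    IsFrobenius M g := by
  obtain ⟨F, hF⟩ := hM.1.1.exists_isFrobenius hM.1.2
  rwa [← eq_of_mem_specialGaps_of_maximal hM (hF.mem_specialGaps hM.1.1)]

theorem isIrreducibleNS_of_maximal
    (hM : Maximal (fun T => IsNumericalSemigroup T ∧ g ∉ T) M) : IsIrreducibleNS M := by
  refine ⟨hM.1.1, fun A B hA hB hMAB => ?_⟩
  have hMA : M ⊆ A := hMAB ▸ Set.inter_subset_left
  have hMB : M ⊆ B := hMAB ▸ Set.inter_subset_right
  by_cases hgA : g ∈ A
  · by_cases hgB : g ∈ B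
    · exact absurd (hMAB ▸ ⟨hgA, hgB⟩) hM.1.2
    · exact Or.inr (hMB.antisymm (hM.2 ⟨hB, hgB⟩ hMB))
  · exact Or.inl (hMA.antisymm (hM.2 ⟨hA, hgA⟩ hMA))

/-- Only finitely many numerical semigroups contain `S`, so a maximal one avoiding `g` exists. -/
theorem exists_maximal_superset {S : Set ℕ} (hS : IsNumericalSemigroup S) (hg : g ∉ S) :
    ∃ M, S ⊆ M ∧ Maximal (fun T => IsNumericalSemigroup T ∧ g ∉ T) M := by
  have hfin : {T | (IsNumericalSemigroup T ∧ g ∉ T) ∧ S ⊆ T}.Finite :=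
    (hS.2.2.finite_subsets.image compl).subset fun T hT =>
      ⟨Tᶜ, Set.compl_subset_compl.mpr hT.2, compl_compl T⟩
  obtain ⟨M, hSM, hM⟩ := hfin.exists_le_maximal ⟨⟨hS, hg⟩, subset_rfl⟩
  exact ⟨M, hSM, hM.1.1, fun T hT hMT => hM.2 ⟨hT, hSM.trans hMT⟩ hMT⟩

end MaximalAvoiding

theorem exists_irreducible_isFrobenius_superset {S : Set ℕ} {g : ℕ}
    (hS : IsNumericalSemigroup S) (hg : g ∉ S) :
    ∃ M, S ⊆ M ∧ IsIrreducibleNS M ∧ IsFrobenius M g := by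
  obtain ⟨M, hSM, hM⟩ := exists_maximal_superset hS hg
  exact ⟨M, hSM, isIrreducibleNS_of_maximal hM, isFrobenius_of_maximal hM⟩

section PairOfSpecialGaps

variable {g₁ g₂ : ℕ} {S T : Set ℕ}

theorem eq_of_subset_of_not_mem_specialGaps_pair (hS : IsNumericalSemigroup S)
    (hE : specialGaps S = {g₁, g₂}) (hT : IsNumericalSemigroup T) (hST : S ⊆ T)
    (hg₁ : g₁ ∉ T) (hg₂ : g₂ ∉ T) : S = T :=
  hS.eq_of_subset_of_disjoint_specialGaps hT hST <| by
    rw [hE, Set.disjoint_insert_left, Set.disjoint_singleton_left]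
    exact ⟨hg₁, hg₂⟩

theorem mem_irreducibleInters_of_specialGaps_eq (hS : IsNumericalSemigroup S)
    (hE : specialGaps S = {g₁, g₂}) (hne : g₁ ≠ g₂) : S ∈ irreducibleInters g₁ g₂ := by
  have hg₁ : g₁ ∈ specialGaps S := hE ▸ Set.mem_insert g₁ {g₂}
  have hg₂ : g₂ ∉ S := (hE ▸ Set.mem_insert_of_mem g₁ rfl : g₂ ∈ specialGaps S).1
  obtain ⟨S₁, hSS₁, hirr₁, hF₁⟩ := exists_irreducible_isFrobenius_superset hS hg₁.1
  obtain ⟨S₂, hSS₂, hirr₂, hF₂⟩ := exists_irreducible_isFrobenius_superset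
    (hS.insert_of_mem_specialGaps hg₁) (show g₂ ∉ insert g₁ S by simp [Ne.symm hne, hg₂])
  refine ⟨S₁, S₂, hirr₁, hF₁, hirr₂, hF₂, hSS₂ (Set.mem_insert g₁ S), ?_⟩
  exact eq_of_subset_of_not_mem_specialGaps_pair hS hE (hirr₁.1.inter hirr₂.1)
    (Set.subset_inter hSS₁ ((Set.subset_insert g₁ S).trans hSS₂))
    (fun h => hF₁.1 h.1) (fun h => hF₂.1 h.2)

theorem eq_of_subset_of_mem_irreducibleInters (hS : IsNumericalSemigroup S)
    (hE : specialGaps S = {g₁, g₂}) (hT : T ∈ irreducibleInters g₁ g₂) (hST : S ⊆ T) :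
    S = T := by
  obtain ⟨T₁, T₂, hirr₁, hF₁, hirr₂, hF₂, -, rfl⟩ := hT
  exact eq_of_subset_of_not_mem_specialGaps_pair hS hE (hirr₁.1.inter hirr₂.1) hST
    (fun h => hF₁.1 h.1) (fun h => hF₂.1 h.2)

theorem mem_of_irreducible_isFrobenius_superset (hS : IsNumericalSemigroup S)
    (hE : specialGaps S = {g₁, g₂}) (hne : g₁ ≠ g₂) (hirr : IsIrreducibleNS T)
    (hF : IsFrobenius T g₂) (hST : S ⊆ T) : g₁ ∈ T := by
  by_contra hg₁
  obtain rfl := eq_of_subset_of_not_mem_specialGaps_pair hS hE hirr.1 hST hg₁ hF.1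
  exact hne (hirr.eq_of_mem_specialGaps hF (hE ▸ Set.mem_insert g₁ {g₂}))

/-- `g₂ < 2 * g₁` is what makes `g₁` a special gap of `S₁ ∩ S₂`. -/
theorem specialGaps_eq_of_maximal_mem_irreducibleInters (h₁ : g₂ < 2 * g₁) (h₂ : g₁ < g₂)
    (hS : S ∈ irreducibleInters g₁ g₂)
    (hmax : ∀ T ∈ irreducibleInters g₁ g₂, S ⊆ T → S = T)
    (hfac : ∀ T, IsIrreducibleNS T → IsFrobenius T g₂ → S ⊆ T → g₁ ∈ T) :
    specialGaps S = {g₁, g₂} := by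
  obtain ⟨S₁, S₂, hirr₁, hF₁, hirr₂, hF₂, hg₁S₂, rfl⟩ := hS
  have hsg : IsNumericalSemigroup (S₁ ∩ S₂) := hirr₁.1.inter hirr₂.1
  have hF : IsFrobenius (S₁ ∩ S₂) g₂ := hF₁.inter hF₂ h₂.le
  refine Set.Subset.antisymm (fun x hx => ?_) (Set.insert_subset_iff.mpr ⟨?_, ?_⟩)
  · by_contra hx₁₂
    simp only [Set.mem_insert_iff, Set.mem_singleton_iff, not_or] at hx₁₂
    have hT := hsg.insert_of_mem_specialGaps hx
    obtain ⟨T₁, hT₁, hirrT₁, hFT₁⟩ := exists_irreducible_isFrobenius_superset hT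
      (show g₁ ∉ insert x (S₁ ∩ S₂) by simp [Ne.symm hx₁₂.1, hF₁.1])
    obtain ⟨T₂, hT₂, hirrT₂, hFT₂⟩ := exists_irreducible_isFrobenius_superset hT
      (show g₂ ∉ insert x (S₁ ∩ S₂) by simp [Ne.symm hx₁₂.2, hF.1])
    have hsub := Set.subset_inter hT₁ hT₂
    have heq := hmax (T₁ ∩ T₂)
      ⟨T₁, T₂, hirrT₁, hFT₁, hirrT₂, hFT₂,
        hfac T₂ hirrT₂ hFT₂ ((Set.subset_insert x _).trans hT₂), rfl⟩
      ((Set.subset_insert x _).trans hsub)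
    exact hx.1 (heq ▸ hsub (Set.mem_insert x _))
  · exact ⟨fun h => hF₁.1 h.1, hF.mem_of_lt (by omega), fun s hs _ =>
      ⟨hF₁.mem_of_lt (by omega), hirr₂.1.2.1 g₁ s hg₁S₂ hs.2⟩⟩
  · exact Set.singleton_subset_iff.mpr (hF.mem_specialGaps hsg)

end PairOfSpecialGaps

theorem stmt15_general (g₁ g₂ : ℕ) (h1 : g₂ < 2 * g₁) (h2 : g₁ < g₂)
    (S : Set ℕ) (hS : IsNumericalSemigroup S) :
    specialGaps S = {g₁, g₂} ↔
    ((∃ S₁ S₂ : Set ℕ, IsIrreducibleNS S₁ ∧ IsFrobenius S₁ g₁ ∧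
        IsIrreducibleNS S₂ ∧ IsFrobenius S₂ g₂ ∧ g₁ ∈ S₂ ∧ S = S₁ ∩ S₂) ∧
      (∀ T : Set ℕ, (∃ T₁ T₂ : Set ℕ, IsIrreducibleNS T₁ ∧ IsFrobenius T₁ g₁ ∧
        IsIrreducibleNS T₂ ∧ IsFrobenius T₂ g₂ ∧ g₁ ∈ T₂ ∧ T = T₁ ∩ T₂) →
        S ⊆ T → S = T) ∧
      (∀ S₂ : Set ℕ, IsIrreducibleNS S₂ → IsFrobenius S₂ g₂ → S ⊆ S₂ → g₁ ∈ S₂)) := by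
  constructor
  · intro hE
    exact ⟨mem_irreducibleInters_of_specialGaps_eq hS hE h2.ne,
      fun T hT => eq_of_subset_of_mem_irreducibleInters hS hE hT,
      fun T => mem_of_irreducible_isFrobenius_superset hS hE h2.ne⟩
  · rintro ⟨hmem, hmax, hfac⟩
    exact specialGaps_eq_of_maximal_mem_irreducibleInters h1 h2 hmem hmax hfac

theorem stmt15 (g₁ g₂ : ℕ) (h0 : 0 < g₁) (h1 : g₂ < 2 * g₁) (h2 : g₁ < g₂)
    (S : Set ℕ) (hS : IsNumericalSemigroup S) :
    specialGaps S = {g₁, g₂} ↔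
    ((∃ S₁ S₂ : Set ℕ, IsIrreducibleNS S₁ ∧ IsFrobenius S₁ g₁ ∧
        IsIrreducibleNS S₂ ∧ IsFrobenius S₂ g₂ ∧ g₁ ∈ S₂ ∧ S = S₁ ∩ S₂) ∧
      (∀ T : Set ℕ, (∃ T₁ T₂ : Set ℕ, IsIrreducibleNS T₁ ∧ IsFrobenius T₁ g₁ ∧
        IsIrreducibleNS T₂ ∧ IsFrobenius T₂ g₂ ∧ g₁ ∈ T₂ ∧ T = T₁ ∩ T₂) →
        S ⊆ T → S = T) ∧
      (∀ S₂ : Set ℕ, IsIrreducibleNS S₂ → IsFrobenius S₂ g₂ → S ⊆ S₂ → g₁ ∈ S₂)) :=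
  stmt15_general g₁ g₂ h1 h2 S hS
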